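/- A D-compact subset A of a PN space (V, ν, τ, τ*), in which ν(V) ⊆ D⁺ and D⁺ is invariant under τ, is D-bounded and closed (in the strong topology). -/

import Mathlib

open Filter Topology

noncomputable section

/-- A distance distribution function: nondecreasing, left-continuous,
vanishing on `(-∞,0]`, bounded by `1`. -/
def DDF (F : ℝ → ℝ) : Prop :=
  Monotone F ∧ (∀ x ≤ 0, F x = 0) ∧ (∀ x, F x ≤ 1) ∧
    ∀ x, Tendsto F (nhdsWithin x (Set.Iio x)) (nhds (F x))

/-- The unit step at `0`. -/
def eps0 : ℝ → ℝ := fun x => if x ≤ 0 then 0 else 1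

/-- The unit step at `c`. -/
def epsc (c : ℝ) : ℝ → ℝ := fun x => if x ≤ c then 0 else 1

/-- `ε∞`: identically 0 on `ℝ` (value 1 only at `+∞`). -/
def epsInf : ℝ → ℝ := fun _ => 0

/-- Membership in `D⁺`: the distribution function tends to `1` at `+∞`. -/
def InDPlus (F : ℝ → ℝ) : Prop := Tendsto F atTop (nhds 1)

/-- Weak convergence of distribution functions. -/
def WeakConv (Fn : ℕ → ℝ → ℝ) (F : ℝ → ℝ) : Prop :=
  ∀ x, ContinuousAt F x → Tendsto (fun n => Fn n x) atTop (nhds (F x))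

/-- A continuous triangle function on `Δ⁺`. -/
def IsTriangleFunction (τ : (ℝ → ℝ) → (ℝ → ℝ) → (ℝ → ℝ)) : Prop :=
  (∀ F G, DDF F → DDF G → DDF (τ F G)) ∧
  (∀ F G H, DDF F → DDF G → DDF H → τ (τ F G) H = τ F (τ G H)) ∧
  (∀ F G, DDF F → DDF G → τ F G = τ G F) ∧
  (∀ F G H, DDF F → DDF G → DDF H → F ≤ G → τ F H ≤ τ G H) ∧
  (∀ F, DDF F → τ F eps0 = F) ∧
  (∀ (Fn : ℕ → ℝ → ℝ) F G, (∀ n, DDF (Fn n)) → DDF F → DDF G →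
    WeakConv Fn F → WeakConv (fun n => τ (Fn n) G) (τ F G))

/-- A probabilistic normed space `(V, ν, τ, τ*)`. -/
structure IsPNSpace (V : Type) [AddCommGroup V] [Module ℝ V]
    (ν : V → ℝ → ℝ) (τ τs : (ℝ → ℝ) → (ℝ → ℝ) → (ℝ → ℝ)) : Prop where
  ddf : ∀ p, DDF (ν p)
  tri : IsTriangleFunction τ
  tris : IsTriangleFunction τs
  tle : ∀ F G, DDF F → DDF G → τ F G ≤ τs F G
  n1 : ∀ p, ν p = eps0 ↔ p = 0
  n2 : ∀ p, ν (-p) = ν p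
  n3 : ∀ p q, τ (ν p) (ν q) ≤ ν (p + q)
  n4 : ∀ (p : V) (l : ℝ), 0 ≤ l → l ≤ 1 →
    ν p ≤ τs (ν (l • p)) (ν ((1 - l) • p))

/-- Archimedean triangle function: no idempotents besides `ε₀` and `ε∞`. -/
def IsArchimedean (τ : (ℝ → ℝ) → (ℝ → ℝ) → (ℝ → ℝ)) : Prop :=
  ∀ F, DDF F → τ F F = F → F = eps0 ∨ F = epsInf

/-- Strong convergence of a sequence in a PN space. -/
def StrongConv {V : Type} [AddCommGroup V] (ν : V → ℝ → ℝ)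
    (q : ℕ → V) (p : V) : Prop :=
  ∀ l : ℝ, 0 < l → ∀ᶠ n in atTop, ν (q n - p) l > 1 - l

/-- Strongly Cauchy sequence in a PN space. -/
def StrongCauchy {V : Type} [AddCommGroup V] (ν : V → ℝ → ℝ) (q : ℕ → V) : Prop :=
  ∀ l : ℝ, 0 < l → ∃ N, ∀ m n, N ≤ m → N ≤ n → ν (q m - q n) l > 1 - l

/-- `A` is `D`-bounded: some `G ∈ D⁺` lies below all `ν p`, `p ∈ A`. -/
def DBounded {V : Type} (ν : V → ℝ → ℝ) (A : Set V) : Prop :=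
  ∃ G : ℝ → ℝ, DDF G ∧ InDPlus G ∧ ∀ p ∈ A, G ≤ ν p

/-- `A` is `D`-compact: every sequence in `A` has a subsequence strongly
convergent to a point of `A`. -/
def DCompact {V : Type} [AddCommGroup V] (ν : V → ℝ → ℝ) (A : Set V) : Prop :=
  ∀ q : ℕ → V, (∀ n, q n ∈ A) → ∃ φ : ℕ → ℕ, StrictMono φ ∧
    ∃ p ∈ A, StrongConv ν (q ∘ φ) p

/-- `A` is closed under strong convergence of sequences. -/
def SeqClosed {V : Type} [AddCommGroup V] (ν : V → ℝ → ℝ) (A : Set V) : Prop :=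
  ∀ (q : ℕ → V) (p : V), (∀ n, q n ∈ A) → StrongConv ν q p → p ∈ A

/-- The probabilistic radius `R_A(x) = l⁻ inf {ν p x : p ∈ A}`. -/
def probRadius {V : Type} (ν : V → ℝ → ℝ) (A : Set V) (x : ℝ) : ℝ :=
  ⨆ y : Set.Iio x, ⨅ p : A, ν (p : V) (y : ℝ)

/-! Closedness: a subsequence of a strongly convergent sequence of points of `A` converges to a
point of `A`, and strong limits are unique because `τ` is continuous with identity `ε₀`.

Boundedness: `A` is `D`-bounded as soon as the `ν p`, `p ∈ A`, tend to `1` uniformly, a lower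
bound in `D⁺` being a supremum of steps. If the uniformity failed, there would be `ε > 0` and
`p_n ∈ A` with `ν p_n n ≤ 1 - ε`. A subsequence converges strongly to some `p`, and
`τ (ν (p_n - p)) (ν p) ≤ ν p_n`; by continuity of `τ` the left side is eventually above `1 - ε`
at a continuity point of `ν p`, a contradiction. -/

theorem ddf_nonneg {F : ℝ → ℝ} (hF : DDF F) (x : ℝ) : 0 ≤ F x :=
  (hF.2.1 (min x 0) (min_le_right _ _)).symm.trans_le (hF.1 (min_le_left _ _))

theorem monotone_indicator_Ioi (c : ℝ) {b : ℝ} (hb : 0 ≤ b) :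
    Monotone ((Set.Ioi c).indicator fun _ => b) := by
  intro x y hxy
  simp only [Set.indicator_apply, Set.mem_Ioi]
  split_ifs with hx hy <;> first | exact le_rfl | exact hb | exact absurd (hx.trans_le hxy) hy

theorem ddf_of_monotone_of_lowerSemicontinuous {F : ℝ → ℝ} (hmono : Monotone F)
    (hlsc : LowerSemicontinuous F) (hzero : ∀ x ≤ 0, F x = 0) (hle : ∀ x, F x ≤ 1) :
    DDF F := by
  refine ⟨hmono, hzero, hle, fun x => tendsto_order.2 ⟨fun a ha => ?_, fun a ha => ?_⟩⟩
  · exact (hlsc x a ha).filter_mono nhdsWithin_le_nhds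
  · filter_upwards [self_mem_nhdsWithin] with y hy using (hmono (le_of_lt hy)).trans_lt ha

theorem ddf_indicator_Ioi {c b : ℝ} (hc : 0 ≤ c) (hb₀ : 0 ≤ b) (hb₁ : b ≤ 1) :
    DDF ((Set.Ioi c).indicator fun _ => b) := by
  refine ddf_of_monotone_of_lowerSemicontinuous (monotone_indicator_Ioi c hb₀)
    (isOpen_Ioi.lowerSemicontinuous_indicator hb₀) (fun x hx => ?_) (fun x => ?_)
  · exact Set.indicator_of_notMem (not_lt.2 (hx.trans hc)) _
  · exact Set.indicator_apply_le' (fun _ => hb₁) (fun _ => zero_le_one)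

theorem eps0_eq_indicator : eps0 = (Set.Ioi 0).indicator fun _ => 1 := by
  ext x
  simp only [eps0, Set.indicator_apply, Set.mem_Ioi, ← not_le]
  split_ifs <;> rfl

theorem ddf_eps0 : DDF eps0 :=
  eps0_eq_indicator ▸ ddf_indicator_Ioi le_rfl zero_le_one le_rfl

theorem eq_eps0_of_forall_lt {F : ℝ → ℝ} (hF : DDF F)
    (h : ∀ μ x, 0 < μ → μ ≤ 1 → μ < x → 1 - μ < F x) : F = eps0 := by
  ext x
  by_cases hx : x ≤ 0
  · rw [hF.2.1 x hx, eps0, if_pos hx]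
  · rw [eps0, if_neg hx]
    refine le_antisymm (hF.2.2.1 x) (le_of_tendsto (f := fun μ => 1 - μ) (x := 𝓝[>] 0) ?_ ?_)
    · simpa using (tendsto_const_nhds (x := (1 : ℝ))).sub
        (tendsto_id.mono_left (nhdsWithin_le_nhds (a := (0 : ℝ)) (s := Set.Ioi 0)))
    · filter_upwards [Ioo_mem_nhdsGT (lt_min (not_le.1 hx) one_pos)] with μ hμ
      exact (h μ x hμ.1 (hμ.2.le.trans (min_le_right _ _)) (hμ.2.trans_le (min_le_left _ _))).le

/-- Every distribution function `F` with `1 - l < F l` (Lévy distance from `ε₀` less than `l`)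
lies above `levyStep l`; this turns strong convergence into an order bound. -/
def levyStep (l : ℝ) : ℝ → ℝ := (Set.Ioi l).indicator fun _ => 1 - l

theorem ddf_levyStep {l : ℝ} (h₀ : 0 ≤ l) (h₁ : l ≤ 1) : DDF (levyStep l) :=
  ddf_indicator_Ioi h₀ (by linarith) (by linarith)

theorem levyStep_apply_of_lt {l x : ℝ} (hx : l < x) : levyStep l x = 1 - l :=
  Set.indicator_of_mem hx _

theorem continuousAt_levyStep {l x : ℝ} (hx : l < x) : ContinuousAt (levyStep l) x := by
  refine Filter.EventuallyEq.continuousAt (y := 1 - l) ?_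
  filter_upwards [isOpen_Ioi.mem_nhds hx] with y hy using levyStep_apply_of_lt hy

theorem levyStep_le {F : ℝ → ℝ} (hF : DDF F) {l : ℝ} (hl : 1 - l < F l) : levyStep l ≤ F := by
  intro x
  by_cases hx : x ∈ Set.Ioi l
  · rw [levyStep, Set.indicator_of_mem hx]
    exact hl.le.trans (hF.1 (le_of_lt hx))
  · rw [levyStep, Set.indicator_of_notMem hx]
    exact ddf_nonneg hF x

theorem weakConv_levyStep_eps0 {l : ℕ → ℝ} (hpos : ∀ j, 0 ≤ l j)
    (hl : Tendsto l atTop (𝓝 0)) : WeakConv (fun j => levyStep (l j)) eps0 := by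
  intro x _
  simp only [levyStep, eps0_eq_indicator]
  by_cases hx : x ∈ Set.Ioi (0 : ℝ)
  · rw [Set.indicator_of_mem hx]
    have hsub : Tendsto (fun j => 1 - l j) atTop (𝓝 1) := by
      simpa using tendsto_const_nhds.sub hl
    refine hsub.congr' ?_
    filter_upwards [hl.eventually (gt_mem_nhds hx)] with j hj
    rw [Set.indicator_of_mem (Set.mem_Ioi.2 hj)]
  · rw [Set.indicator_of_notMem hx]
    refine tendsto_const_nhds.congr fun j => (Set.indicator_of_notMem ?_ _).symm
    exact fun hj => hx ((hpos j).trans_lt hj)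

section TriangleFunction

variable {τ : (ℝ → ℝ) → (ℝ → ℝ) → (ℝ → ℝ)}

theorem IsTriangleFunction.mono_left (hτ : IsTriangleFunction τ) {F G H : ℝ → ℝ}
    (hF : DDF F) (hG : DDF G) (hH : DDF H) (hle : F ≤ G) : τ F H ≤ τ G H :=
  hτ.2.2.2.1 F G H hF hG hH hle

theorem IsTriangleFunction.mono_right (hτ : IsTriangleFunction τ) {F G H : ℝ → ℝ}
    (hF : DDF F) (hG : DDF G) (hH : DDF H) (hle : G ≤ H) : τ F G ≤ τ F H := by
  rw [hτ.2.2.1 F G hF hG, hτ.2.2.1 F H hF hH]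
  exact hτ.mono_left hG hH hF hle

theorem IsTriangleFunction.eps0_left (hτ : IsTriangleFunction τ) {G : ℝ → ℝ} (hG : DDF G) :
    τ eps0 G = G :=
  (hτ.2.2.1 _ _ ddf_eps0 hG).trans (hτ.2.2.2.2.1 G hG)

/-- Since `levyStep (1 / (j + 1)) → ε₀` weakly, continuity of `τ` gives
`τ (levyStep (1 / (j + 1))) G → τ ε₀ G = G` at continuity points of `G`. -/
theorem IsTriangleFunction.exists_lt_levyStep_apply (hτ : IsTriangleFunction τ) {G : ℝ → ℝ}
    (hG : DDF G) {x a : ℝ} (hx : ContinuousAt G x) (ha : a < G x) :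
    ∃ l ∈ Set.Ioc (0 : ℝ) 1, a < τ (levyStep l) G x := by
  set l : ℕ → ℝ := fun j => 1 / ((j : ℝ) + 1)
  have hl : ∀ j, l j ∈ Set.Ioc (0 : ℝ) 1 := fun j =>
    ⟨by positivity, div_le_one_of_le₀ (by linarith [j.cast_nonneg (α := ℝ)]) (by positivity)⟩
  have hconv := hτ.2.2.2.2.2 _ _ G (fun j => ddf_levyStep (hl j).1.le (hl j).2) ddf_eps0 hG
    (weakConv_levyStep_eps0 (fun j => (hl j).1.le) tendsto_one_div_add_atTop_nhds_zero_nat) x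
  rw [hτ.eps0_left hG] at hconv
  obtain ⟨j, hj⟩ := ((hconv hx).eventually (lt_mem_nhds ha)).exists
  exact ⟨l j, hl j, hj⟩

end TriangleFunction

theorem exists_continuousAt_lt_of_inDPlus {F : ℝ → ℝ} (hmono : Monotone F) (hF : InDPlus F)
    {a : ℝ} (ha : a < 1) : ∃ x, ContinuousAt F x ∧ a < F x := by
  obtain ⟨X, hX⟩ := eventually_atTop.1 ((tendsto_order.1 hF).1 a ha)
  obtain ⟨x, hx, hXx⟩ := (hmono.countable_not_continuousAt.dense_compl ℝ).exists_mem_open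
    isOpen_Ioi (Set.nonempty_Ioi (a := X))
  exact ⟨x, not_not.1 hx, hX x (le_of_lt hXx)⟩

section StrongConv

variable {V : Type} [AddCommGroup V] {ν : V → ℝ → ℝ} {q : ℕ → V} {p : V}

theorem StrongConv.comp_strictMono (hq : StrongConv ν q p) {φ : ℕ → ℕ} (hφ : StrictMono φ) :
    StrongConv ν (q ∘ φ) p :=
  fun l hl => hφ.tendsto_atTop.eventually (hq l hl)

theorem StrongConv.eventually_lt_triangle_apply (hq : StrongConv ν q p)
    {τ : (ℝ → ℝ) → (ℝ → ℝ) → (ℝ → ℝ)} (hτ : IsTriangleFunction τ) (hν : ∀ v, DDF (ν v))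
    {G : ℝ → ℝ} (hG : DDF G) {x a : ℝ} (hx : ContinuousAt G x) (ha : a < G x) :
    ∀ᶠ n in atTop, a < τ (ν (q n - p)) G x := by
  obtain ⟨l, hl, hlt⟩ := hτ.exists_lt_levyStep_apply hG hx ha
  filter_upwards [hq l hl.1] with n hn
  exact hlt.trans_le (hτ.mono_left (ddf_levyStep hl.1.le hl.2) (hν _) hG (levyStep_le (hν _) hn) x)

end StrongConv

section PNSpace

variable {V : Type} [AddCommGroup V] [Module ℝ V] {ν : V → ℝ → ℝ}
  {τ τs : (ℝ → ℝ) → (ℝ → ℝ) → (ℝ → ℝ)} {q : ℕ → V} {p : V}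

theorem StrongConv.unique (h : IsPNSpace V ν τ τs) (hp : StrongConv ν q p) {p' : V}
    (hp' : StrongConv ν q p') : p = p' := by
  suffices ν (p' - p) = eps0 from (sub_eq_zero.1 ((h.n1 _).1 this)).symm
  refine eq_eps0_of_forall_lt (h.ddf _) fun μ x hμ hμ₁ hμx => ?_
  have hμ₂ : 0 < μ / 2 := half_pos hμ
  have hG : DDF (levyStep (μ / 2)) := ddf_levyStep hμ₂.le (by linarith)
  have hGx : 1 - μ < levyStep (μ / 2) x := by
    rw [levyStep_apply_of_lt (by linarith)]; linarith
  obtain ⟨n, hn, hn'⟩ := ((hp.eventually_lt_triangle_apply h.tri h.ddf hG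
    (continuousAt_levyStep (by linarith)) hGx).and (hp' (μ / 2) hμ₂)).exists
  have hstep : levyStep (μ / 2) ≤ ν (p' - q n) := by
    rw [← neg_sub, h.n2]; exact levyStep_le (h.ddf _) hn'
  calc 1 - μ < τ (ν (q n - p)) (levyStep (μ / 2)) x := hn
    _ ≤ τ (ν (q n - p)) (ν (p' - q n)) x := h.tri.mono_right (h.ddf _) hG (h.ddf _) hstep x
    _ ≤ ν (q n - p + (p' - q n)) x := h.n3 _ _ x
    _ = ν (p' - p) x := by rw [sub_add_sub_cancel']

theorem StrongConv.exists_eventually_lt_apply (h : IsPNSpace V ν τ τs) (hq : StrongConv ν q p)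
    (hp : InDPlus (ν p)) {a : ℝ} (ha : a < 1) : ∃ x, ∀ᶠ n in atTop, a < ν (q n) x := by
  obtain ⟨x, hx, hax⟩ := exists_continuousAt_lt_of_inDPlus (h.ddf p).1 hp ha
  refine ⟨x, (hq.eventually_lt_triangle_apply h.tri h.ddf (h.ddf p) hx hax).mono fun n hn => ?_⟩
  simpa using hn.trans_le (h.n3 (q n - p) p x)

end PNSpace

/-- For nonempty `A` this says that the probabilistic radius `probRadius ν A` lies in `D⁺`. -/
def UniformlyInDPlus {V : Type} (ν : V → ℝ → ℝ) (A : Set V) : Prop :=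
  ∀ a < 1, ∃ x, ∀ p ∈ A, a < ν p x

theorem DCompact.uniformlyInDPlus {V : Type} [AddCommGroup V] [Module ℝ V] {ν : V → ℝ → ℝ}
    {τ τs : (ℝ → ℝ) → (ℝ → ℝ) → (ℝ → ℝ)} (h : IsPNSpace V ν τ τs) (hD : ∀ p, InDPlus (ν p))
    {A : Set V} (hA : DCompact ν A) : UniformlyInDPlus ν A := by
  intro a ha
  by_contra! hbad
  choose r hrA hr using hbad
  obtain ⟨φ, hφ, p, -, hconv⟩ := hA (fun n : ℕ => r n) fun n => hrA n
  obtain ⟨x, hx⟩ := hconv.exists_eventually_lt_apply h (hD p) ha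
  have hφx : ∀ᶠ n in atTop, x ≤ (φ n : ℝ) :=
    (tendsto_natCast_atTop_atTop.comp hφ.tendsto_atTop).eventually_ge_atTop x
  obtain ⟨n, hn, hxn⟩ := (hx.and hφx).exists
  exact (hn.trans_le ((h.ddf _).1 hxn)).not_ge (hr _)

def stepSup (c z : ℕ → ℝ) (t : ℝ) : ℝ :=
  ⨆ k, (Set.Ioi (z k)).indicator (fun _ => c k) t

section StepSup

variable {c z : ℕ → ℝ}

theorem bddAbove_range_step (hc₁ : ∀ k, c k ≤ 1) (t : ℝ) :
    BddAbove (Set.range fun k => (Set.Ioi (z k)).indicator (fun _ => c k) t) :=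
  ⟨1, Set.forall_mem_range.2 fun k => Set.indicator_apply_le' (fun _ => hc₁ k) fun _ => zero_le_one⟩

theorem stepSup_le_one (hc₁ : ∀ k, c k ≤ 1) (t : ℝ) : stepSup c z t ≤ 1 :=
  ciSup_le fun k => Set.indicator_apply_le' (fun _ => hc₁ k) fun _ => zero_le_one

theorem ddf_stepSup (hc₀ : ∀ k, 0 ≤ c k) (hc₁ : ∀ k, c k ≤ 1) (hz : ∀ k, 0 ≤ z k) :
    DDF (stepSup c z) := by
  refine ddf_of_monotone_of_lowerSemicontinuous (F := stepSup c z)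
    (fun s t hst => ciSup_mono (bddAbove_range_step hc₁ t)
      fun k => monotone_indicator_Ioi (z k) (hc₀ k) hst)
    (lowerSemicontinuous_ciSup (bddAbove_range_step hc₁)
      fun k => isOpen_Ioi.lowerSemicontinuous_indicator (hc₀ k))
    (fun t ht => ?_) (stepSup_le_one hc₁)
  have hk : ∀ k, t ∉ Set.Ioi (z k) := fun k => not_lt.2 (ht.trans (hz k))
  simp only [stepSup, Set.indicator_of_notMem (hk _), ciSup_const]

theorem inDPlus_stepSup (hc₁ : ∀ k, c k ≤ 1) (hc : Tendsto c atTop (𝓝 1)) :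
    InDPlus (stepSup c z) := by
  refine tendsto_order.2 ⟨fun a ha => ?_, fun a ha => Eventually.of_forall fun t =>
    (stepSup_le_one hc₁ t).trans_lt ha⟩
  obtain ⟨k, hk⟩ := ((tendsto_order.1 hc).1 a ha).exists
  filter_upwards [eventually_gt_atTop (z k)] with t ht
  exact hk.trans_le ((Set.indicator_of_mem ht (fun _ => c k)).symm.trans_le
    (le_ciSup (bddAbove_range_step hc₁ t) k))

theorem stepSup_le {F : ℝ → ℝ} (hF : DDF F) (hle : ∀ k, c k ≤ F (z k)) : stepSup c z ≤ F := by
  intro t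
  refine ciSup_le fun k => ?_
  by_cases ht : t ∈ Set.Ioi (z k)
  · rw [Set.indicator_of_mem ht]
    exact (hle k).trans (hF.1 (le_of_lt ht))
  · rw [Set.indicator_of_notMem ht]
    exact ddf_nonneg hF t

end StepSup

theorem UniformlyInDPlus.dBounded {V : Type} {ν : V → ℝ → ℝ} (hν : ∀ p, DDF (ν p)) {A : Set V}
    (hA : UniformlyInDPlus ν A) : DBounded ν A := by
  set c : ℕ → ℝ := fun k => 1 - 1 / ((k : ℝ) + 1)
  have hc : ∀ k, 0 ≤ c k ∧ c k < 1 := fun k => by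
    have h₀ : 0 < 1 / ((k : ℝ) + 1) := by positivity
    have h₁ : 1 / ((k : ℝ) + 1) ≤ 1 :=
      div_le_one_of_le₀ (by linarith [k.cast_nonneg (α := ℝ)]) (by positivity)
    constructor <;> linarith
  choose x hx using fun k => hA (c k) (hc k).2
  have hcl : Tendsto c atTop (𝓝 1) := by
    simpa [c] using (tendsto_const_nhds (x := (1 : ℝ))).sub tendsto_one_div_add_atTop_nhds_zero_nat
  refine ⟨stepSup c fun k => max (x k) 0,
    ddf_stepSup (fun k => (hc k).1) (fun k => (hc k).2.le) fun k => le_max_right _ _,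
    inDPlus_stepSup (fun k => (hc k).2.le) hcl, fun p hp => stepSup_le (hν p) fun k => ?_⟩
  exact (hx k p hp).le.trans ((hν p).1 (le_max_left _ _))

theorem statement12_general {V : Type} [AddCommGroup V] [Module ℝ V]
    (ν : V → ℝ → ℝ) (τ τs : (ℝ → ℝ) → (ℝ → ℝ) → (ℝ → ℝ))
    (h : IsPNSpace V ν τ τs)
    (hD : ∀ p : V, InDPlus (ν p))
    (A : Set V) (hA : DCompact ν A) :
    DBounded ν A ∧ SeqClosed ν A := by
  refine ⟨(hA.uniformlyInDPlus h hD).dBounded h.ddf, fun q p hq hqp => ?_⟩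
  obtain ⟨φ, hφ, p', hp'A, hqp'⟩ := hA q hq
  rwa [(hqp.comp_strictMono hφ).unique h hqp']

/-- A `D`-compact subset of a PN space with `ν(V) ⊆ D⁺` and `τ`-invariant `D⁺`
is `D`-bounded and closed. -/
theorem statement12 {V : Type} [AddCommGroup V] [Module ℝ V]
    (ν : V → ℝ → ℝ) (τ τs : (ℝ → ℝ) → (ℝ → ℝ) → (ℝ → ℝ))
    (h : IsPNSpace V ν τ τs)
    (hD : ∀ p : V, InDPlus (ν p))
    (hInv : ∀ F G, DDF F → DDF G → InDPlus F → InDPlus G → InDPlus (τ F G))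
    (A : Set V) (hA : DCompact ν A) :
    DBounded ν A ∧ SeqClosed ν A :=
  statement12_general ν τ τs h hD A hA
end
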